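/- arXiv:2405.20451 — 4 statements merged into one kernel-verified Lean document; each statement's English description precedes it below -/
import Mathlib

section
/- Let 𝒳 be a nonempty set, let h : 𝒳 × ℝ^m → ℝ be such that for every x ∈ 𝒳 the map ξ ↦ h(x,ξ) is L-Lipschitz, and let P and Q be Borel probability measures on ℝ^m with finite first moments under which every h(x,·) is integrable. If inf_{x∈𝒳} E_P[h(x,ξ)] is finite, then inf_{x∈𝒳} E_Q[h(x,ξ)] ≤ inf_{x∈𝒳} E_P[h(x,ξ)] + L · d_W(P, Q). -/
/-! For a coupling `γ` of `P` and `Q`, `E_Q f - E_P f = ∫ (f ξ₂ - f ξ₁) dγ`, which a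
`K`-Lipschitz `f` bounds by `K ∫ ‖ξ₁ - ξ₂‖ dγ`; the infimum over couplings gives
`|E_Q f - E_P f| ≤ K d_W(P, Q)`. Applied to every `h x`, this two-sided bound moves the
infimum over `x` by at most `L d_W(P, Q)`. -/

open MeasureTheory

noncomputable section

abbrev Vec (m : ℕ) := EuclideanSpace ℝ (Fin m)

def IsCoupling {m : ℕ} (γ : Measure (Vec m × Vec m)) (P Q : Measure (Vec m)) : Prop :=
  IsProbabilityMeasure γ ∧ γ.map Prod.fst = P ∧ γ.map Prod.snd = Q

/-- The type-1 Wasserstein distance `d_W`. -/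
noncomputable def wDist {m : ℕ} (P Q : Measure (Vec m)) : ℝ :=
  sInf {c : ℝ | ∃ γ : Measure (Vec m × Vec m), IsCoupling γ P Q ∧ c = ∫ p, ‖p.1 - p.2‖ ∂γ}

def RSFeasible {m : ℕ} {X : Type*} (h : X → Vec m → ℝ)
    (Phat : Measure (Vec m)) (τ : ℝ) (x : X) (k : ℝ) : Prop :=
  0 ≤ k ∧ ∀ P : Measure (Vec m), IsProbabilityMeasure P →
    Integrable (fun ξ => ‖ξ‖) P → (∫ ξ, h x ξ ∂P) - τ ≤ k * wDist P Phat

noncomputable def empMeas {m N : ℕ} (xs : Fin N → Vec m) : Measure (Vec m) :=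
  (N : ENNReal)⁻¹ • ∑ i : Fin N, Measure.dirac (xs i)

open Set
open scoped NNReal

section Marginals

variable {E : Type*} [NormedAddCommGroup E] [MeasurableSpace E] [OpensMeasurableSpace E]
  [MeasurableSub₂ E] {γ : Measure (E × E)} {P Q : Measure E}

theorem integrable_norm_sub_of_marginals (hγP : γ.map Prod.fst = P) (hγQ : γ.map Prod.snd = Q)
    (hP : Integrable (fun ξ => ‖ξ‖) P) (hQ : Integrable (fun ξ => ‖ξ‖) Q) :
    Integrable (fun p : E × E => ‖p.1 - p.2‖) γ := by
  have h₁ : Integrable (fun p : E × E => ‖p.1‖) γ := (hγP ▸ hP).comp_measurable measurable_fst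
  have h₂ : Integrable (fun p : E × E => ‖p.2‖) γ := (hγQ ▸ hQ).comp_measurable measurable_snd
  refine (h₁.add h₂).mono' (measurable_sub.norm.aestronglyMeasurable) ?_
  filter_upwards with p
  simpa only [Pi.add_apply, Real.norm_eq_abs, abs_norm] using norm_sub_le p.1 p.2

theorem LipschitzWith.abs_integral_sub_le_of_marginals (hγP : γ.map Prod.fst = P)
    (hγQ : γ.map Prod.snd = Q) (hP : Integrable (fun ξ => ‖ξ‖) P) (hQ : Integrable (fun ξ => ‖ξ‖) Q)
    {f : E → ℝ} {K : ℝ≥0} (hf : LipschitzWith K f) (hfP : Integrable f P)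
    (hfQ : Integrable f Q) :
    |∫ ξ, f ξ ∂Q - ∫ ξ, f ξ ∂P| ≤ K * ∫ p, ‖p.1 - p.2‖ ∂γ := by
  have hf₁ : Integrable (fun p : E × E => f p.1) γ := (hγP ▸ hfP).comp_measurable measurable_fst
  have hf₂ : Integrable (fun p : E × E => f p.2) γ := (hγQ ▸ hfQ).comp_measurable measurable_snd
  have hP_eq : ∫ ξ, f ξ ∂P = ∫ p, f p.1 ∂γ := by
    rw [← hγP, integral_map measurable_fst.aemeasurable (hγP ▸ hfP.aestronglyMeasurable)]
  have hQ_eq : ∫ ξ, f ξ ∂Q = ∫ p, f p.2 ∂γ := by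
    rw [← hγQ, integral_map measurable_snd.aemeasurable (hγQ ▸ hfQ.aestronglyMeasurable)]
  calc |∫ ξ, f ξ ∂Q - ∫ ξ, f ξ ∂P| = |∫ p, (f p.2 - f p.1) ∂γ| := by
        rw [hP_eq, hQ_eq, integral_sub hf₂ hf₁]
    _ ≤ ∫ p, |f p.2 - f p.1| ∂γ := abs_integral_le_integral_abs
    _ ≤ ∫ p, K * ‖p.1 - p.2‖ ∂γ := by
        refine integral_mono (hf₂.sub hf₁).abs
          ((integrable_norm_sub_of_marginals hγP hγQ hP hQ).const_mul _) fun p => ?_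
        have := hf.dist_le_mul p.2 p.1
        rwa [Real.dist_eq, dist_comm, dist_eq_norm] at this
    _ = K * ∫ p, ‖p.1 - p.2‖ ∂γ := integral_const_mul _ _

end Marginals

theorem isCoupling_prod {m : ℕ} (P Q : Measure (Vec m)) [IsProbabilityMeasure P]
    [IsProbabilityMeasure Q] : IsCoupling (P.prod Q) P Q :=
  ⟨inferInstance, by simp, by simp⟩

theorem LipschitzWith.abs_integral_sub_le_mul_wDist {m : ℕ} {P Q : Measure (Vec m)}
    [IsProbabilityMeasure P] [IsProbabilityMeasure Q]
    (hP : Integrable (fun ξ => ‖ξ‖) P) (hQ : Integrable (fun ξ => ‖ξ‖) Q)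
    {f : Vec m → ℝ} {K : ℝ≥0} (hf : LipschitzWith K f) (hfP : Integrable f P)
    (hfQ : Integrable f Q) :
    |∫ ξ, f ξ ∂Q - ∫ ξ, f ξ ∂P| ≤ K * wDist P Q := by
  have hne : Set.Nonempty {c : ℝ | ∃ γ, IsCoupling γ P Q ∧ c = ∫ p, ‖p.1 - p.2‖ ∂γ} :=
    ⟨_, _, isCoupling_prod P Q, rfl⟩
  rw [wDist, ← smul_eq_mul, ← Real.sInf_smul_of_nonneg K.coe_nonneg]
  refine le_csInf hne.smul_set ?_
  rintro _ ⟨_, ⟨γ, ⟨-, hγP, hγQ⟩, rfl⟩, rfl⟩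
  exact hf.abs_integral_sub_le_of_marginals hγP hγQ hP hQ hfP hfQ

/-- if every h(x,.) is L-Lipschitz and integrable under P and Q, and
inf_x E_P[h(x,.)] is finite, then inf_x E_Q[h(x,.)] <= inf_x E_P[h(x,.)] + L d_W(P,Q). -/
theorem inf_expectation_le_inf_expectation_add_wasserstein
    {m : ℕ} {X : Type*} [Nonempty X]
    (h : X → Vec m → ℝ) (L : ℝ) (hL : 0 ≤ L)
    (hLip : ∀ x ξ η, |h x ξ - h x η| ≤ L * ‖ξ - η‖)
    (P Q : Measure (Vec m)) [IsProbabilityMeasure P] [IsProbabilityMeasure Q]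
    (hPmom : Integrable (fun ξ => ‖ξ‖) P) (hQmom : Integrable (fun ξ => ‖ξ‖) Q)
    (hIntP : ∀ x, Integrable (h x) P) (hIntQ : ∀ x, Integrable (h x) Q)
    (hfin : BddBelow (Set.range fun x => ∫ ξ, h x ξ ∂P)) :
    (⨅ x, ∫ ξ, h x ξ ∂Q) ≤ (⨅ x, ∫ ξ, h x ξ ∂P) + L * wDist P Q := by
  have hlip : ∀ x, LipschitzWith ⟨L, hL⟩ (h x) := fun x =>
    .of_dist_le_mul fun ξ η => by rw [Real.dist_eq, dist_eq_norm]; exact hLip x ξ η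
  have hbound : ∀ x, |∫ ξ, h x ξ ∂Q - ∫ ξ, h x ξ ∂P| ≤ L * wDist P Q := fun x =>
    (hlip x).abs_integral_sub_le_mul_wDist hPmom hQmom (hIntP x) (hIntQ x)
  obtain ⟨b, hb⟩ := hfin
  have hQbdd : BddBelow (range fun x => ∫ ξ, h x ξ ∂Q) := by
    refine ⟨b - L * wDist P Q, ?_⟩
    rintro _ ⟨x, rfl⟩
    linarith [hb ⟨x, rfl⟩, (abs_le.mp (hbound x)).1]
  exact le_ciInf_add fun x => (ciInf_le hQbdd x).trans (by linarith [(abs_le.mp (hbound x)).2])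
end
end

section
/- (Deterministic confidence chain, Eq. (14).) Let ε > 0 and set τ_ε := (1+ε)·inf_{x∈𝒳} E_{P̂}[h(x,ξ)], assumed finite. Suppose (x̂, k̂) ∈ 𝒳 × [0,∞) is RS-feasible for τ_ε. Then −L · d_W(P*, P̂) + τ_ε/(1+ε) ≤ J* ≤ E_{P*}[h(x̂,ξ)] ≤ k̂ · d_W(P*, P̂) + τ_ε, where J* := inf_{x∈𝒳} E_{P*}[h(x,ξ)]. -/
open MeasureTheory

noncomputable section

/-- Deterministic confidence chain, Eq. (14):
-L d_W(P*,Phat) + tau_eps/(1+eps) <= J* <= E_{P*}[h(xhat,.)] <= khat d_W(P*,Phat) + tau_eps. -/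
theorem deterministic_confidence_chain {m : ℕ} {X : Type*} [Nonempty X]
    (h : X → Vec m → ℝ) (L : ℝ) (hL : 0 ≤ L)
    (hLip : ∀ x ξ η, |h x ξ - h x η| ≤ L * ‖ξ - η‖)
    (Pstar Phat : Measure (Vec m))
    [IsProbabilityMeasure Pstar] [IsProbabilityMeasure Phat]
    (hPstarmom : Integrable (fun ξ => ‖ξ‖) Pstar)
    (hPhatmom : Integrable (fun ξ => ‖ξ‖) Phat)
    (hIntPstar : ∀ x, Integrable (h x) Pstar)
    (hIntPhat : ∀ x, Integrable (h x) Phat)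
    (ε : ℝ) (hε : 0 < ε)
    (τ : ℝ) (hτ : τ = (1 + ε) * ⨅ x, ∫ ξ, h x ξ ∂Phat)
    (hfin : BddBelow (Set.range fun x => ∫ ξ, h x ξ ∂Phat))
    (xhat : X) (khat : ℝ) (hfeas : RSFeasible h Phat τ xhat khat) :
    -L * wDist Pstar Phat + τ / (1 + ε) ≤ (⨅ x, ∫ ξ, h x ξ ∂Pstar) ∧
      (⨅ x, ∫ ξ, h x ξ ∂Pstar) ≤ (∫ ξ, h xhat ξ ∂Pstar) ∧
      (∫ ξ, h xhat ξ ∂Pstar) ≤ khat * wDist Pstar Phat + τ := by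

  obtain ⟨hk0, hfe⟩ := hfeas
  -- continuity of h x in ξ
  have hcont : ∀ x : X, Continuous (h x) := by
    intro x
    refine (LipschitzWith.of_dist_le_mul (K := L.toNNReal) ?_).continuous
    intro a b
    calc dist (h x a) (h x b) = |h x a - h x b| := rfl
      _ ≤ L * ‖a - b‖ := hLip x a b
      _ ≤ L.toNNReal * dist a b := by
          rw [dist_eq_norm]
          gcongr
          exact Real.le_coe_toNNReal L
  set S := {c : ℝ | ∃ γ : Measure (Vec m × Vec m), IsCoupling γ Pstar Phat ∧
      c = ∫ p, ‖p.1 - p.2‖ ∂γ} with hS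
  -- the coupling set is nonempty
  have hSne : S.Nonempty := by
    refine ⟨∫ p, ‖p.1 - p.2‖ ∂(Pstar.prod Phat), Pstar.prod Phat, ⟨inferInstance, ?_, ?_⟩, rfl⟩
    · rw [Measure.map_fst_prod]; simp
    · rw [Measure.map_snd_prod]; simp
  -- key estimate for every coupling
  have main : ∀ x : X, ∀ γ : Measure (Vec m × Vec m), IsCoupling γ Pstar Phat →
      (∫ ξ, h x ξ ∂Phat) - (∫ ξ, h x ξ ∂Pstar) ≤ L * ∫ p, ‖p.1 - p.2‖ ∂γ := by
    rintro x γ ⟨hγp, hfst, hsnd⟩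
    haveI := hγp
    have hmf : Integrable (fun p : Vec m × Vec m => h x p.1) γ := by
      have h1 := hIntPstar x
      rw [← hfst] at h1
      exact (integrable_map_measure (hcont x).aestronglyMeasurable
        measurable_fst.aemeasurable).mp h1
    have hms : Integrable (fun p : Vec m × Vec m => h x p.2) γ := by
      have h1 := hIntPhat x
      rw [← hsnd] at h1
      exact (integrable_map_measure (hcont x).aestronglyMeasurable
        measurable_snd.aemeasurable).mp h1
    have hn1 : Integrable (fun p : Vec m × Vec m => ‖p.1‖) γ := by
      have h1 := hPstarmom
      rw [← hfst] at h1
      exact (integrable_map_measure (continuous_norm.aestronglyMeasurable)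
        measurable_fst.aemeasurable).mp h1
    have hn2 : Integrable (fun p : Vec m × Vec m => ‖p.2‖) γ := by
      have h1 := hPhatmom
      rw [← hsnd] at h1
      exact (integrable_map_measure (continuous_norm.aestronglyMeasurable)
        measurable_snd.aemeasurable).mp h1
    have hnorm : Integrable (fun p : Vec m × Vec m => ‖p.1 - p.2‖) γ := by
      refine (hn1.add hn2).mono
        ((continuous_fst.sub continuous_snd).norm.aestronglyMeasurable)
        (ae_of_all _ fun p => ?_)
      have h1 : (0:ℝ) ≤ ‖p.1‖ + ‖p.2‖ := by positivity
      simp only [Pi.add_apply, Real.norm_eq_abs, abs_norm]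
      rw [abs_of_nonneg h1]
      exact norm_sub_le _ _
    have e1 : ∫ p, h x p.1 ∂γ = ∫ ξ, h x ξ ∂Pstar := by
      rw [← hfst, integral_map measurable_fst.aemeasurable (hcont x).aestronglyMeasurable]
    have e2 : ∫ p, h x p.2 ∂γ = ∫ ξ, h x ξ ∂Phat := by
      rw [← hsnd, integral_map measurable_snd.aemeasurable (hcont x).aestronglyMeasurable]
    calc (∫ ξ, h x ξ ∂Phat) - (∫ ξ, h x ξ ∂Pstar)
        = ∫ p, (h x p.2 - h x p.1) ∂γ := by rw [integral_sub hms hmf, e1, e2]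
      _ ≤ ∫ p, L * ‖p.1 - p.2‖ ∂γ := by
          refine integral_mono (hms.sub hmf) (hnorm.const_mul L) fun p => ?_
          calc h x p.2 - h x p.1 ≤ |h x p.2 - h x p.1| := le_abs_self _
            _ ≤ L * ‖p.2 - p.1‖ := hLip x p.2 p.1
            _ = L * ‖p.1 - p.2‖ := by rw [norm_sub_rev]
      _ = L * ∫ p, ‖p.1 - p.2‖ ∂γ := integral_const_mul L _
  -- key estimate with the infimum
  have key : ∀ x : X, (∫ ξ, h x ξ ∂Phat) - (∫ ξ, h x ξ ∂Pstar) ≤ L * wDist Pstar Phat := by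
    intro x
    rcases eq_or_lt_of_le hL with hL0 | hL0
    · obtain ⟨c, γ, hγ, hc⟩ := hSne
      have := main x γ hγ
      rw [← hL0] at this ⊢
      simpa using this
    · have h1 : ((∫ ξ, h x ξ ∂Phat) - (∫ ξ, h x ξ ∂Pstar)) / L ≤ wDist Pstar Phat := by
        refine le_csInf hSne ?_
        rintro c ⟨γ, hγ, rfl⟩
        rw [div_le_iff₀' hL0]
        exact main x γ hγ
      calc (∫ ξ, h x ξ ∂Phat) - (∫ ξ, h x ξ ∂Pstar)
          = L * (((∫ ξ, h x ξ ∂Phat) - (∫ ξ, h x ξ ∂Pstar)) / L) := by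
            field_simp
        _ ≤ L * wDist Pstar Phat := by
            exact mul_le_mul_of_nonneg_left h1 hL
  -- bounded below over Pstar
  have hbdd : BddBelow (Set.range fun x => ∫ ξ, h x ξ ∂Pstar) := by
    refine ⟨(⨅ x, ∫ ξ, h x ξ ∂Phat) - L * wDist Pstar Phat, ?_⟩
    rintro y ⟨x, rfl⟩
    have h1 := key x
    have h2 : (⨅ x, ∫ ξ, h x ξ ∂Phat) ≤ ∫ ξ, h x ξ ∂Phat := ciInf_le hfin x
    linarith
  have hτε : τ / (1 + ε) = ⨅ x, ∫ ξ, h x ξ ∂Phat := by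
    rw [hτ]
    field_simp
  refine ⟨?_, ciInf_le hbdd xhat, ?_⟩
  · rw [hτε]
    refine le_ciInf fun x => ?_
    have h1 := key x
    have h2 : (⨅ x, ∫ ξ, h x ξ ∂Phat) ≤ ∫ ξ, h x ξ ∂Phat := ciInf_le hfin x
    linarith
  · have := hfe Pstar inferInstance hPstarmom
    linarith
end
end

section
/- (Theorem 3.2, deterministic generalization bound.) Let ε > 0, set τ_ε := (1+ε)·inf_{x∈𝒳} E_{P̂}[h(x,ξ)] (assumed finite), let J* := inf_{x∈𝒳} E_{P*}[h(x,ξ)] (assumed finite), and suppose (x̂, k̂) ∈ 𝒳 × [0,∞) is RS-feasible for τ_ε. Then the generalization error satisfies E_{P*}[h(x̂,ξ)] − J* ≤ ε·J* + (2+ε)·L·d_W(P*, P̂). -/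
open MeasureTheory Pointwise

noncomputable section

lemma wDist_nonneg {m : ℕ} (P Q : Measure (Vec m)) : 0 ≤ wDist P Q := by
  apply Real.sInf_nonneg
  rintro c ⟨γ, hγ, rfl⟩
  exact integral_nonneg fun p => norm_nonneg _

lemma couplingSet_nonempty {m : ℕ} (P Q : Measure (Vec m))
    [IsProbabilityMeasure P] [IsProbabilityMeasure Q] :
    {c : ℝ | ∃ γ : Measure (Vec m × Vec m), IsCoupling γ P Q ∧
      c = ∫ p, ‖p.1 - p.2‖ ∂γ}.Nonempty := by
  refine ⟨_, P.prod Q, ⟨inferInstance, ?_, ?_⟩, rfl⟩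
  · simp [MeasureTheory.Measure.map_fst_prod]
  · simp [MeasureTheory.Measure.map_snd_prod]

lemma wDist_self_eq_zero {m : ℕ} (P : Measure (Vec m)) [IsProbabilityMeasure P] :
    wDist P P = 0 := by
  refine le_antisymm ?_ (wDist_nonneg P P)
  apply csInf_le ⟨0, fun c hc => ?_⟩
  · have hm : Measurable fun ξ : Vec m => (ξ, ξ) := measurable_id.prodMk measurable_id
    refine ⟨P.map (fun ξ => (ξ, ξ)), ⟨?_, ?_, ?_⟩, ?_⟩
    · exact Measure.isProbabilityMeasure_map hm.aemeasurable
    · rw [Measure.map_map measurable_fst hm]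
      exact Measure.map_id
    · rw [Measure.map_map measurable_snd hm]
      exact Measure.map_id
    · rw [integral_map hm.aemeasurable]
      · simp
      · exact (measurable_fst.sub measurable_snd).norm.aestronglyMeasurable
  · obtain ⟨γ, hγ, rfl⟩ := hc
    exact integral_nonneg fun p => norm_nonneg _

lemma exp_diff_le {m : ℕ} {X : Type*} (h : X → Vec m → ℝ) (L : ℝ) (hL : 0 ≤ L)
    (hLip : ∀ x ξ η, |h x ξ - h x η| ≤ L * ‖ξ - η‖)
    (P Q : Measure (Vec m)) [IsProbabilityMeasure P] [IsProbabilityMeasure Q]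
    (hPmom : Integrable (fun ξ => ‖ξ‖) P) (hQmom : Integrable (fun ξ => ‖ξ‖) Q)
    (x : X) (hIP : Integrable (h x) P) (hIQ : Integrable (h x) Q) :
    (∫ ξ, h x ξ ∂P) - (∫ ξ, h x ξ ∂Q) ≤ L * wDist P Q := by
  have key : ∀ c ∈ {c : ℝ | ∃ γ : Measure (Vec m × Vec m), IsCoupling γ P Q ∧
      c = ∫ p, ‖p.1 - p.2‖ ∂γ},
      (∫ ξ, h x ξ ∂P) - (∫ ξ, h x ξ ∂Q) ≤ L * c := by
    rintro c ⟨γ, ⟨hprob, hfst, hsnd⟩, rfl⟩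
    haveI := hprob
    have hIP' : Integrable (h x) (γ.map Prod.fst) := hfst ▸ hIP
    have hIQ' : Integrable (h x) (γ.map Prod.snd) := hsnd ▸ hIQ
    have hPmom' : Integrable (fun ξ => ‖ξ‖) (γ.map Prod.fst) := hfst ▸ hPmom
    have hQmom' : Integrable (fun ξ => ‖ξ‖) (γ.map Prod.snd) := hsnd ▸ hQmom
    have hIf : Integrable (fun p : Vec m × Vec m => h x p.1) γ :=
      (integrable_map_measure hIP'.aestronglyMeasurable
        measurable_fst.aemeasurable).mp hIP'
    have hIg : Integrable (fun p : Vec m × Vec m => h x p.2) γ :=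
      (integrable_map_measure hIQ'.aestronglyMeasurable
        measurable_snd.aemeasurable).mp hIQ'
    have hn1 : Integrable (fun p : Vec m × Vec m => ‖p.1‖) γ :=
      (integrable_map_measure hPmom'.aestronglyMeasurable
        measurable_fst.aemeasurable).mp hPmom'
    have hn2 : Integrable (fun p : Vec m × Vec m => ‖p.2‖) γ :=
      (integrable_map_measure hQmom'.aestronglyMeasurable
        measurable_snd.aemeasurable).mp hQmom'
    have hdist : Integrable (fun p : Vec m × Vec m => ‖p.1 - p.2‖) γ := by
      refine (hn1.add hn2).mono'
        (measurable_fst.sub measurable_snd).norm.aestronglyMeasurable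
        (Filter.Eventually.of_forall fun p => ?_)
      simpa using norm_sub_le p.1 p.2
    have e1 : (∫ ξ, h x ξ ∂P) = ∫ p, h x p.1 ∂γ := by
      rw [← hfst, integral_map measurable_fst.aemeasurable hIP'.aestronglyMeasurable]
    have e2 : (∫ ξ, h x ξ ∂Q) = ∫ p, h x p.2 ∂γ := by
      rw [← hsnd, integral_map measurable_snd.aemeasurable hIQ'.aestronglyMeasurable]
    rw [e1, e2, ← integral_sub hIf hIg, ← integral_const_mul]
    exact integral_mono (hIf.sub hIg) (hdist.const_mul L)
      (fun p => le_trans (le_abs_self _) (hLip x p.1 p.2))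
  have hne := couplingSet_nonempty P Q
  rw [show L * wDist P Q = sInf (L • {c : ℝ | ∃ γ : Measure (Vec m × Vec m),
      IsCoupling γ P Q ∧ c = ∫ p, ‖p.1 - p.2‖ ∂γ}) by
    rw [Real.sInf_smul_of_nonneg hL]; rfl]
  refine le_csInf (hne.smul_set) ?_
  rintro b ⟨c, hc, rfl⟩
  simpa using key c hc

/-- Theorem 3.2, deterministic generalization bound:
E_{P*}[h(xhat,.)] - J* <= eps J* + (2+eps) L d_W(P*, Phat). -/
theorem deterministic_generalization_bound {m : ℕ} {X : Type*} [Nonempty X]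
    (h : X → Vec m → ℝ) (L : ℝ) (hL : 0 ≤ L)
    (hLip : ∀ x ξ η, |h x ξ - h x η| ≤ L * ‖ξ - η‖)
    (Pstar Phat : Measure (Vec m))
    [IsProbabilityMeasure Pstar] [IsProbabilityMeasure Phat]
    (hPstarmom : Integrable (fun ξ => ‖ξ‖) Pstar)
    (hPhatmom : Integrable (fun ξ => ‖ξ‖) Phat)
    (hIntPstar : ∀ x, Integrable (h x) Pstar)
    (hIntPhat : ∀ x, Integrable (h x) Phat)
    (ε : ℝ) (hε : 0 < ε)
    (τ : ℝ) (hτ : τ = (1 + ε) * ⨅ x, ∫ ξ, h x ξ ∂Phat)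
    (hfinPhat : BddBelow (Set.range fun x => ∫ ξ, h x ξ ∂Phat))
    (hfinPstar : BddBelow (Set.range fun x => ∫ ξ, h x ξ ∂Pstar))
    (xhat : X) (khat : ℝ) (hfeas : RSFeasible h Phat τ xhat khat) :
    (∫ ξ, h xhat ξ ∂Pstar) - (⨅ x, ∫ ξ, h x ξ ∂Pstar) ≤
      ε * (⨅ x, ∫ ξ, h x ξ ∂Pstar) + (2 + ε) * L * wDist Pstar Phat := by
  obtain ⟨hk, hfe⟩ := hfeas
  set Jstar := ⨅ x, ∫ ξ, h x ξ ∂Pstar with hJstar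
  set Jhat := ⨅ x, ∫ ξ, h x ξ ∂Phat with hJhat
  set w := wDist Pstar Phat with hw
  have hwnn : 0 ≤ w := wDist_nonneg _ _
  -- E_{Phat} h x ≤ E_{Pstar} h x + L w for all x
  have hJhat_le : Jhat ≤ Jstar + L * w := by
    have h1 : ∀ x, Jhat ≤ (∫ ξ, h x ξ ∂Pstar) + L * w := by
      intro x
      have := exp_diff_le (fun x ξ => - h x ξ) L hL
        (fun x ξ η => by rw [show (-h x ξ) - (-h x η) = -(h x ξ - h x η) by ring, abs_neg]; exact hLip x ξ η)
        Pstar Phat hPstarmom hPhatmom x ((hIntPstar x).neg) ((hIntPhat x).neg)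
      simp only [integral_neg] at this
      have h2 : (∫ ξ, h x ξ ∂Phat) ≤ (∫ ξ, h x ξ ∂Pstar) + L * w := by linarith
      exact le_trans (ciInf_le hfinPhat x) h2
    have h3 : Jhat - L * w ≤ Jstar := by
      refine le_ciInf fun x => ?_
      linarith [h1 x]
    linarith
  -- feasibility at Phat: E_{Phat} h xhat ≤ τ
  have hfeasPhat : (∫ ξ, h xhat ξ ∂Phat) ≤ τ := by
    have := hfe Phat inferInstance hPhatmom
    rw [wDist_self_eq_zero] at this
    linarith
  -- Lipschitz transfer for xhat
  have hxhat : (∫ ξ, h xhat ξ ∂Pstar) ≤ (∫ ξ, h xhat ξ ∂Phat) + L * w := by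
    have := exp_diff_le h L hL hLip Pstar Phat hPstarmom hPhatmom xhat
      (hIntPstar xhat) (hIntPhat xhat)
    linarith
  have hτle : τ ≤ (1 + ε) * (Jstar + L * w) := by
    rw [hτ]
    exact mul_le_mul_of_nonneg_left hJhat_le (by linarith)
  nlinarith [mul_nonneg hL hwnn]
end
end

section
/- (Theorem 4.1, confidence interval under distribution shift.) Let P̃ be a target Borel probability measure on ℝ^m with finite first moment, possibly different from the sampling distribution P*. Let ξ₁,…,ξ_N be i.i.d. from P*, P̂_N their empirical measure, τ_ε := (1+ε)·inf_{x∈𝒳} E_{P̂_N}[h(x,ξ)] (a.s. finite), and (x̂_N, k̂_N) a random pair a.s. RS-feasible for τ_ε with respect to P̂_N. Suppose r_N > 0 and β_N ∈ (0,1) satisfy P{ d_W(P*, P̂_N) > r_N } ≤ β_N. Then with probability at least 1 − β_N: −L·r_N − L·d_W(P*, P̃) + τ_ε/(1+ε) ≤ J̃ ≤ E_{P̃}[h(x̂_N,ξ)] ≤ k̂_N·r_N + k̂_N·d_W(P*, P̃) + τ_ε, where J̃ := inf_{x∈𝒳} E_{P̃}[h(x,ξ)]. -/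
open MeasureTheory

noncomputable section

/-!
On the event `d_W(P*, P̂_N) ≤ r`, of probability at least `1 - β`, the triangle inequality gives
`d_W(P̃, P̂_N) ≤ d_W(P*, P̃) + r`. Testing RS-feasibility at `P = P̃` then gives the upper bound.
Integrating the Lipschitz bound of `h x` against couplings shows that `P ↦ E_P[h(x, ξ)]` is
`L`-Lipschitz for `d_W`, hence so is its infimum over `x`, which gives the lower bound. The
triangle inequality for `d_W` comes from gluing two couplings along their common marginal by
disintegrating one of them.
-/

open ProbabilityTheory Set
open scoped NNReal ENNReal

theorem MeasureTheory.Measure.map_compProd_prodMkLeft {α β γ : Type*} [MeasurableSpace α]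
    [MeasurableSpace β] [MeasurableSpace γ] (μ : Measure (α × β)) [SFinite μ]
    (κ : Kernel β γ) [IsSFiniteKernel κ] :
    (μ ⊗ₘ κ.prodMkLeft α).map (fun p => (p.1.2, p.2)) = μ.snd ⊗ₘ κ := by
  have hmeas : Measurable fun p : (α × β) × γ => (p.1.2, p.2) :=
    measurable_fst.snd.prodMk measurable_snd
  ext s hs
  rw [Measure.map_apply hmeas hs, Measure.compProd_apply (hmeas hs), Measure.compProd_apply hs,
    Measure.snd, lintegral_map (Kernel.measurable_kernel_prodMk_left hs) measurable_snd]
  rfl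

theorem MeasureTheory.Measure.exists_gluing {α β γ : Type*} [MeasurableSpace α]
    [MeasurableSpace β] [MeasurableSpace γ] [StandardBorelSpace γ] [Nonempty γ]
    (ρ₁ : Measure (α × β)) (ρ₂ : Measure (β × γ)) [SFinite ρ₁] [IsFiniteMeasure ρ₂]
    (h : ρ₁.snd = ρ₂.fst) :
    ∃ η : Measure ((α × β) × γ), η.map Prod.fst = ρ₁ ∧ η.map (fun p => (p.1.2, p.2)) = ρ₂ := by
  refine ⟨ρ₁ ⊗ₘ ρ₂.condKernel.prodMkLeft α, Measure.fst_compProd _ _, ?_⟩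
  rw [Measure.map_compProd_prodMkLeft, h, ρ₂.disintegrate]

theorem LipschitzWith.integrable_of_integrable_norm {E F : Type*} [NormedAddCommGroup E]
    [MeasurableSpace E] [OpensMeasurableSpace E] [NormedAddCommGroup F]
    [SecondCountableTopologyEither E F] {μ : Measure E} [IsFiniteMeasure μ] {K : ℝ≥0}
    {f : E → F} (hf : LipschitzWith K f) (hμ : Integrable (fun x => ‖x‖) μ) :
    Integrable f μ := by
  refine ((integrable_const ‖f 0‖).add (hμ.const_mul K)).mono'
    hf.continuous.aestronglyMeasurable (ae_of_all _ fun x => ?_)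
  have := hf.dist_le_mul x 0
  rw [dist_eq_norm, dist_zero_right] at this
  show ‖f x‖ ≤ ‖f 0‖ + K * ‖x‖
  linarith [norm_le_norm_add_norm_sub' (f x) (f 0)]

theorem ofReal_one_sub_le_measure_of_ae_imp {Ω : Type*} [MeasurableSpace Ω] {μ : Measure Ω}
    [IsProbabilityMeasure μ] {s t : Set Ω} {β : ℝ} (hβ : 0 ≤ β) (hs : μ s ≤ ENNReal.ofReal β)
    (hst : ∀ᵐ ω ∂μ, ω ∉ s → ω ∈ t) :
    ENNReal.ofReal (1 - β) ≤ μ t := by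
  have hcover : 1 ≤ μ s + μ t := calc
    1 = μ univ := measure_univ.symm
    _ ≤ μ (s ∪ t) := measure_mono_ae (hst.mono fun ω h _ => (em (ω ∈ s)).imp_right h)
    _ ≤ μ s + μ t := measure_union_le s t
  rw [ENNReal.ofReal_sub _ hβ, ENNReal.ofReal_one]
  exact tsub_le_iff_left.2 (hcover.trans (by gcongr))

section Wasserstein

variable {m : ℕ} {γ : Measure (Vec m × Vec m)} {P Q R : Measure (Vec m)}

theorem IsCoupling.prod (P Q : Measure (Vec m)) [IsProbabilityMeasure P]
    [IsProbabilityMeasure Q] : IsCoupling (P.prod Q) P Q :=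
  ⟨inferInstance, Measure.fst_prod, Measure.snd_prod⟩

theorem IsCoupling.swap (hγ : IsCoupling γ P Q) : IsCoupling (γ.map Prod.swap) Q P := by
  obtain ⟨hprob, hP, hQ⟩ := hγ
  refine ⟨Measure.isProbabilityMeasure_map measurable_swap.aemeasurable, ?_, ?_⟩
  · rwa [Measure.map_map measurable_fst measurable_swap]
  · rwa [Measure.map_map measurable_snd measurable_swap]

theorem IsCoupling.integrable_comp_fst {E : Type*} [NormedAddCommGroup E] {f : Vec m → E}
    (hγ : IsCoupling γ P Q) (hf : Integrable f P) : Integrable (fun p => f p.1) γ :=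
  (hγ.2.1 ▸ hf).comp_measurable measurable_fst

theorem IsCoupling.integrable_comp_snd {E : Type*} [NormedAddCommGroup E] {f : Vec m → E}
    (hγ : IsCoupling γ P Q) (hf : Integrable f Q) : Integrable (fun p => f p.2) γ :=
  (hγ.2.2 ▸ hf).comp_measurable measurable_snd

theorem IsCoupling.integral_comp_fst {E : Type*} [NormedAddCommGroup E] [NormedSpace ℝ E]
    {f : Vec m → E} (hγ : IsCoupling γ P Q) (hf : AEStronglyMeasurable f P) :
    ∫ p, f p.1 ∂γ = ∫ ξ, f ξ ∂P := by
  rw [← hγ.2.1] at hf ⊢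
  exact (integral_map measurable_fst.aemeasurable hf).symm

theorem IsCoupling.integral_comp_snd {E : Type*} [NormedAddCommGroup E] [NormedSpace ℝ E]
    {f : Vec m → E} (hγ : IsCoupling γ P Q) (hf : AEStronglyMeasurable f Q) :
    ∫ p, f p.2 ∂γ = ∫ ξ, f ξ ∂Q := by
  rw [← hγ.2.2] at hf ⊢
  exact (integral_map measurable_snd.aemeasurable hf).symm

theorem IsCoupling.integrable_norm_sub (hγ : IsCoupling γ P Q)
    (hP : Integrable (fun ξ => ‖ξ‖) P) (hQ : Integrable (fun ξ => ‖ξ‖) Q) :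
    Integrable (fun p => ‖p.1 - p.2‖) γ :=
  ((hγ.integrable_comp_fst hP).add (hγ.integrable_comp_snd hQ)).mono' (by fun_prop)
    (ae_of_all _ fun p => by simpa using norm_sub_le p.1 p.2)

theorem wDist_le_integral (hγ : IsCoupling γ P Q) : wDist P Q ≤ ∫ p, ‖p.1 - p.2‖ ∂γ :=
  csInf_le ⟨0, by rintro _ ⟨γ, -, rfl⟩; positivity⟩ ⟨γ, hγ, rfl⟩

theorem le_wDist [IsProbabilityMeasure P] [IsProbabilityMeasure Q] {a : ℝ}
    (h : ∀ γ, IsCoupling γ P Q → a ≤ ∫ p, ‖p.1 - p.2‖ ∂γ) : a ≤ wDist P Q :=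
  le_csInf ⟨_, _, IsCoupling.prod P Q, rfl⟩ (by rintro _ ⟨γ, hγ, rfl⟩; exact h γ hγ)

theorem integral_norm_sub_map_swap (γ : Measure (Vec m × Vec m)) :
    ∫ p, ‖p.1 - p.2‖ ∂γ.map Prod.swap = ∫ p, ‖p.1 - p.2‖ ∂γ := by
  rw [integral_map measurable_swap.aemeasurable (by fun_prop)]
  simp_rw [Prod.fst_swap, Prod.snd_swap, norm_sub_rev]

theorem wDist_comm (P Q : Measure (Vec m)) : wDist P Q = wDist Q P := by
  unfold wDist
  congr 1
  ext c
  constructor <;>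
  · rintro ⟨γ, hγ, rfl⟩
    exact ⟨_, hγ.swap, (integral_norm_sub_map_swap γ).symm⟩

theorem IsCoupling.wDist_le_add {γ₁ γ₂ : Measure (Vec m × Vec m)}
    (hγ₁ : IsCoupling γ₁ P Q) (hγ₂ : IsCoupling γ₂ Q R) (hP : Integrable (fun ξ => ‖ξ‖) P)
    (hQ : Integrable (fun ξ => ‖ξ‖) Q) (hR : Integrable (fun ξ => ‖ξ‖) R) :
    wDist P R ≤ (∫ p, ‖p.1 - p.2‖ ∂γ₁) + ∫ p, ‖p.1 - p.2‖ ∂γ₂ := by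
  have := hγ₁.1
  have := hγ₂.1
  obtain ⟨η, h₁₂, h₂₃⟩ := Measure.exists_gluing γ₁ γ₂
    (by rw [Measure.snd, Measure.fst, hγ₁.2.2, hγ₂.2.1])
  have hm₂₃ : Measurable fun q : (Vec m × Vec m) × Vec m => (q.1.2, q.2) := by fun_prop
  have hm₁₃ : Measurable fun q : (Vec m × Vec m) × Vec m => (q.1.1, q.2) := by fun_prop
  have : IsProbabilityMeasure η :=
    (Measure.isProbabilityMeasure_map_iff measurable_fst.aemeasurable).1 (h₁₂ ▸ hγ₁.1)
  have hglue : IsCoupling (η.map fun q => (q.1.1, q.2)) P R := by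
    refine ⟨Measure.isProbabilityMeasure_map hm₁₃.aemeasurable, ?_, ?_⟩
    · rw [Measure.map_map measurable_fst hm₁₃, ← hγ₁.2.1, ← h₁₂,
        Measure.map_map measurable_fst measurable_fst]
      rfl
    · rw [Measure.map_map measurable_snd hm₁₃, ← hγ₂.2.2, ← h₂₃,
        Measure.map_map measurable_snd hm₂₃]
      rfl
  have i₁₂ : Integrable (fun q : (Vec m × Vec m) × Vec m => ‖q.1.1 - q.1.2‖) η :=
    (h₁₂ ▸ hγ₁.integrable_norm_sub hP hQ).comp_measurable measurable_fst
  have i₂₃ : Integrable (fun q : (Vec m × Vec m) × Vec m => ‖q.1.2 - q.2‖) η :=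
    (h₂₃ ▸ hγ₂.integrable_norm_sub hQ hR).comp_measurable hm₂₃
  have e₁₂ : ∫ q, ‖q.1.1 - q.1.2‖ ∂η = ∫ p, ‖p.1 - p.2‖ ∂γ₁ := by
    rw [← h₁₂, integral_map measurable_fst.aemeasurable (by fun_prop)]
  have e₂₃ : ∫ q, ‖q.1.2 - q.2‖ ∂η = ∫ p, ‖p.1 - p.2‖ ∂γ₂ := by
    rw [← h₂₃, integral_map hm₂₃.aemeasurable (by fun_prop)]
  calc wDist P R ≤ ∫ p, ‖p.1 - p.2‖ ∂η.map fun q => (q.1.1, q.2) := wDist_le_integral hglue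
    _ = ∫ q, ‖q.1.1 - q.2‖ ∂η := integral_map hm₁₃.aemeasurable (by fun_prop)
    _ ≤ ∫ q, ‖q.1.1 - q.1.2‖ + ‖q.1.2 - q.2‖ ∂η :=
      integral_mono_of_nonneg (ae_of_all _ fun _ => norm_nonneg _) (i₁₂.add i₂₃)
        (ae_of_all _ fun q => norm_sub_le_norm_sub_add_norm_sub _ _ _)
    _ = _ := by rw [integral_add i₁₂ i₂₃, e₁₂, e₂₃]

theorem wDist_triangle [IsProbabilityMeasure P] [IsProbabilityMeasure Q] [IsProbabilityMeasure R]
    (hP : Integrable (fun ξ => ‖ξ‖) P) (hQ : Integrable (fun ξ => ‖ξ‖) Q)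
    (hR : Integrable (fun ξ => ‖ξ‖) R) :
    wDist P R ≤ wDist P Q + wDist Q R := by
  suffices ∀ γ₂, IsCoupling γ₂ Q R → wDist P R - wDist P Q ≤ ∫ p, ‖p.1 - p.2‖ ∂γ₂ by
    linarith [le_wDist this]
  intro γ₂ hγ₂
  have := le_wDist fun γ₁ hγ₁ => sub_le_iff_le_add.2 (hγ₁.wDist_le_add hγ₂ hP hQ hR)
  linarith

theorem LipschitzWith.integral_sub_integral_le_mul_wDist {K : ℝ≥0} {f : Vec m → ℝ}
    (hf : LipschitzWith K f) [IsProbabilityMeasure P] [IsProbabilityMeasure Q]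
    (hP : Integrable (fun ξ => ‖ξ‖) P) (hQ : Integrable (fun ξ => ‖ξ‖) Q) :
    ∫ ξ, f ξ ∂P - ∫ ξ, f ξ ∂Q ≤ K * wDist P Q := by
  have hfP := hf.integrable_of_integrable_norm hP
  have hfQ := hf.integrable_of_integrable_norm hQ
  have hcoupling : ∀ γ, IsCoupling γ P Q →
      ∫ ξ, f ξ ∂P - ∫ ξ, f ξ ∂Q ≤ K * ∫ p, ‖p.1 - p.2‖ ∂γ := by
    intro γ hγ
    rw [← hγ.integral_comp_fst hfP.1, ← hγ.integral_comp_snd hfQ.1,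
      ← integral_sub (hγ.integrable_comp_fst hfP) (hγ.integrable_comp_snd hfQ),
      ← integral_const_mul]
    refine integral_mono ((hγ.integrable_comp_fst hfP).sub (hγ.integrable_comp_snd hfQ))
      ((hγ.integrable_norm_sub hP hQ).const_mul _) fun p => ?_
    simpa [Real.dist_eq, dist_eq_norm] using (le_abs_self _).trans (hf.dist_le_mul p.1 p.2)
  rcases eq_zero_or_pos K with rfl | hK
  · simpa using hcoupling _ (IsCoupling.prod P Q)
  · replace hK : (0 : ℝ) < K := hK
    exact (div_le_iff₀' hK).1 (le_wDist fun γ hγ => (div_le_iff₀' hK).2 (hcoupling γ hγ))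

end Wasserstein

section EmpiricalMeasure

variable {m N : ℕ}

theorem isProbabilityMeasure_empMeas (hN : 0 < N) (xs : Fin N → Vec m) :
    IsProbabilityMeasure (empMeas xs) := by
  constructor
  simp only [empMeas, Measure.smul_apply, Measure.coe_finsetSum, Finset.sum_apply,
    measure_univ, Finset.sum_const, Finset.card_univ, Fintype.card_fin, nsmul_eq_mul, mul_one,
    smul_eq_mul]
  exact ENNReal.inv_mul_cancel (by exact_mod_cast hN.ne') (ENNReal.natCast_ne_top N)

theorem integrable_empMeas {E : Type*} [NormedAddCommGroup E] (hN : 0 < N) (xs : Fin N → Vec m)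
    (f : Vec m → E) : Integrable f (empMeas xs) :=
  (integrable_finsetSum_measure.2 fun i _ => integrable_dirac enorm_lt_top).smul_measure
    (ENNReal.inv_ne_top.2 (by exact_mod_cast hN.ne'))

end EmpiricalMeasure

section ValueBounds

variable {m : ℕ} {X : Type*} {h : X → Vec m → ℝ} {K : ℝ≥0} {P Q : Measure (Vec m)}
  [IsProbabilityMeasure P] [IsProbabilityMeasure Q]

theorem bddBelow_range_integral_of_lipschitzWith (hh : ∀ x, LipschitzWith K (h x))
    (hP : Integrable (fun ξ => ‖ξ‖) P) (hQ : Integrable (fun ξ => ‖ξ‖) Q)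
    (hbdd : BddBelow (range fun x => ∫ ξ, h x ξ ∂P)) :
    BddBelow (range fun x => ∫ ξ, h x ξ ∂Q) := by
  obtain ⟨B, hB⟩ := hbdd
  refine ⟨B - K * wDist P Q, ?_⟩
  rintro _ ⟨x, rfl⟩
  linarith [hB ⟨x, rfl⟩, (hh x).integral_sub_integral_le_mul_wDist hP hQ]

theorem iInf_integral_sub_mul_wDist_le [Nonempty X] (hh : ∀ x, LipschitzWith K (h x))
    (hP : Integrable (fun ξ => ‖ξ‖) P) (hQ : Integrable (fun ξ => ‖ξ‖) Q)
    (hbdd : BddBelow (range fun x => ∫ ξ, h x ξ ∂P)) :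
    (⨅ x, ∫ ξ, h x ξ ∂P) - K * wDist P Q ≤ ⨅ x, ∫ ξ, h x ξ ∂Q :=
  le_ciInf fun x => by
    linarith [ciInf_le hbdd x, (hh x).integral_sub_integral_le_mul_wDist hP hQ]

theorem confidence_bounds_of_wDist_le [Nonempty X] (hh : ∀ x, LipschitzWith K (h x))
    {Pstar Ptilde Phat : Measure (Vec m)} [IsProbabilityMeasure Pstar]
    [IsProbabilityMeasure Ptilde] [IsProbabilityMeasure Phat]
    (hPstar : Integrable (fun ξ => ‖ξ‖) Pstar) (hPtilde : Integrable (fun ξ => ‖ξ‖) Ptilde)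
    (hPhat : Integrable (fun ξ => ‖ξ‖) Phat) {r τ k : ℝ} {xhat : X}
    (hr : wDist Pstar Phat ≤ r) (hbdd : BddBelow (range fun x => ∫ ξ, h x ξ ∂Phat))
    (hfeas : RSFeasible h Phat τ xhat k) :
    -K * r - K * wDist Pstar Ptilde + (⨅ x, ∫ ξ, h x ξ ∂Phat) ≤ (⨅ x, ∫ ξ, h x ξ ∂Ptilde) ∧
      (⨅ x, ∫ ξ, h x ξ ∂Ptilde) ≤ ∫ ξ, h xhat ξ ∂Ptilde ∧
      ∫ ξ, h xhat ξ ∂Ptilde ≤ k * r + k * wDist Pstar Ptilde + τ := by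
  obtain ⟨hk, hfeas⟩ := hfeas
  have hshift : wDist Ptilde Phat ≤ wDist Pstar Ptilde + r := calc
    wDist Ptilde Phat ≤ wDist Ptilde Pstar + wDist Pstar Phat :=
      wDist_triangle hPtilde hPstar hPhat
    _ ≤ wDist Pstar Ptilde + r := by rw [wDist_comm]; gcongr
  refine ⟨?_, ciInf_le (bddBelow_range_integral_of_lipschitzWith hh hPhat hPtilde hbdd) xhat, ?_⟩
  · have hinf := iInf_integral_sub_mul_wDist_le hh hPhat hPtilde hbdd
    rw [wDist_comm] at hinf
    nlinarith [mul_le_mul_of_nonneg_left hshift K.2]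
  · linarith [hfeas Ptilde inferInstance hPtilde, mul_le_mul_of_nonneg_left hshift hk]

end ValueBounds

theorem confidence_interval_distribution_shift_general {m N : ℕ} (hN : 0 < N)
    {X : Type*} [Nonempty X]
    {Ω : Type*} [MeasurableSpace Ω] (μ : Measure Ω) [IsProbabilityMeasure μ]
    (h : X → Vec m → ℝ) (L : ℝ) (hL : 0 ≤ L)
    (hLip : ∀ x ξ η, |h x ξ - h x η| ≤ L * ‖ξ - η‖)
    -- sampling distribution and target distribution
    (Pstar Ptilde : Measure (Vec m))
    [IsProbabilityMeasure Pstar] [IsProbabilityMeasure Ptilde]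
    (hPstarmom : Integrable (fun ξ => ‖ξ‖) Pstar)
    (hPtildemom : Integrable (fun ξ => ‖ξ‖) Ptilde)
    -- i.i.d. samples from Pstar
    (ξs : Fin N → Ω → Vec m)
    -- empirical measure
    (Phat : Ω → Measure (Vec m)) (hPhat : ∀ ω, Phat ω = empMeas (fun i => ξs i ω))
    -- reference value
    (ε : ℝ) (hε : 0 < ε)
    (τ : Ω → ℝ) (hτ : ∀ ω, τ ω = (1 + ε) * ⨅ x, ∫ ξ, h x ξ ∂(Phat ω))
    (hfin : ∀ᵐ ω ∂μ, BddBelow (Set.range fun x => ∫ ξ, h x ξ ∂(Phat ω)))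
    -- almost surely RS-feasible random pair
    (xhat : Ω → X) (khat : Ω → ℝ)
    (hfeas : ∀ᵐ ω ∂μ, RSFeasible h (Phat ω) (τ ω) (xhat ω) (khat ω))
    -- concentration of the empirical measure
    (r β : ℝ) (hβ0 : 0 < β)
    (htail : μ {ω | r < wDist Pstar (Phat ω)} ≤ ENNReal.ofReal β) :
    ENNReal.ofReal (1 - β) ≤
      μ {ω | -L * r - L * wDist Pstar Ptilde + τ ω / (1 + ε) ≤
               (⨅ x, ∫ ξ, h x ξ ∂Ptilde) ∧
             (⨅ x, ∫ ξ, h x ξ ∂Ptilde) ≤ (∫ ξ, h (xhat ω) ξ ∂Ptilde) ∧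
             (∫ ξ, h (xhat ω) ξ ∂Ptilde) ≤
               khat ω * r + khat ω * wDist Pstar Ptilde + τ ω} := by
  have hK : (L.toNNReal : ℝ) = L := Real.coe_toNNReal L hL
  have hh : ∀ x, LipschitzWith L.toNNReal (h x) := fun x =>
    LipschitzWith.of_dist_le_mul fun ξ η => by
      rw [hK, Real.dist_eq, dist_eq_norm]
      exact hLip x ξ η
  refine ofReal_one_sub_le_measure_of_ae_imp hβ0.le htail ?_
  filter_upwards [hfin, hfeas] with ω hbdd hfeasω hgood
  have : IsProbabilityMeasure (Phat ω) := hPhat ω ▸ isProbabilityMeasure_empMeas hN _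
  have hτω : τ ω / (1 + ε) = ⨅ x, ∫ ξ, h x ξ ∂(Phat ω) := by
    rw [hτ, mul_div_cancel_left₀ _ (by positivity)]
  have hbounds := confidence_bounds_of_wDist_le hh hPstarmom hPtildemom
    (hPhat ω ▸ integrable_empMeas hN _ _) (not_lt.1 hgood) hbdd hfeasω
  rwa [hK, ← hτω] at hbounds

/-- Theorem 4.1, confidence interval under distribution shift:
with probability at least 1 - beta_N,
-L r_N - L d_W(P*,Ptilde) + tau_eps/(1+eps) <= Jtilde <= E_{Ptilde}[h(xhat_N,.)]
  <= khat_N r_N + khat_N d_W(P*,Ptilde) + tau_eps. -/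
theorem confidence_interval_distribution_shift {m N : ℕ} (hN : 0 < N)
    {X : Type*} [Nonempty X]
    {Ω : Type*} [MeasurableSpace Ω] (μ : Measure Ω) [IsProbabilityMeasure μ]
    (h : X → Vec m → ℝ) (L : ℝ) (hL : 0 ≤ L)
    (hLip : ∀ x ξ η, |h x ξ - h x η| ≤ L * ‖ξ - η‖)
    (hInt : ∀ x (P : Measure (Vec m)), IsProbabilityMeasure P →
      Integrable (fun ξ => ‖ξ‖) P → Integrable (h x) P)
    -- sampling distribution and target distribution
    (Pstar Ptilde : Measure (Vec m))
    [IsProbabilityMeasure Pstar] [IsProbabilityMeasure Ptilde]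
    (hPstarmom : Integrable (fun ξ => ‖ξ‖) Pstar)
    (hPtildemom : Integrable (fun ξ => ‖ξ‖) Ptilde)
    -- i.i.d. samples from Pstar
    (ξs : Fin N → Ω → Vec m) (hmeas : ∀ i, Measurable (ξs i))
    (hindep : ProbabilityTheory.iIndepFun ξs μ)
    (hdist : ∀ i, μ.map (ξs i) = Pstar)
    -- empirical measure
    (Phat : Ω → Measure (Vec m)) (hPhat : ∀ ω, Phat ω = empMeas (fun i => ξs i ω))
    -- reference value
    (ε : ℝ) (hε : 0 < ε)
    (τ : Ω → ℝ) (hτ : ∀ ω, τ ω = (1 + ε) * ⨅ x, ∫ ξ, h x ξ ∂(Phat ω))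
    (hfin : ∀ᵐ ω ∂μ, BddBelow (Set.range fun x => ∫ ξ, h x ξ ∂(Phat ω)))
    -- almost surely RS-feasible random pair
    (xhat : Ω → X) (khat : Ω → ℝ)
    (hfeas : ∀ᵐ ω ∂μ, RSFeasible h (Phat ω) (τ ω) (xhat ω) (khat ω))
    -- concentration of the empirical measure
    (r β : ℝ) (hr : 0 < r) (hβ0 : 0 < β) (hβ1 : β < 1)
    (htail : μ {ω | r < wDist Pstar (Phat ω)} ≤ ENNReal.ofReal β) :
    ENNReal.ofReal (1 - β) ≤
      μ {ω | -L * r - L * wDist Pstar Ptilde + τ ω / (1 + ε) ≤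
               (⨅ x, ∫ ξ, h x ξ ∂Ptilde) ∧
             (⨅ x, ∫ ξ, h x ξ ∂Ptilde) ≤ (∫ ξ, h (xhat ω) ξ ∂Ptilde) ∧
             (∫ ξ, h (xhat ω) ξ ∂Ptilde) ≤
               khat ω * r + khat ω * wDist Pstar Ptilde + τ ω} :=
  confidence_interval_distribution_shift_general hN μ h L hL hLip Pstar Ptilde hPstarmom hPtildemom
    ξs Phat hPhat ε hε τ hτ hfin xhat khat hfeas r β hβ0 htail
end
end
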